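/- arXiv:2601.12266 — 5 statements merged into one kernel-verified Lean document; each statement's English description precedes it below -/
import Mathlib

section
/- Let λ, μ, δ > 0 with (λ + μ)δ < 1. Let S be an exponential random variable with rate μ and let X be a nonnegative random variable independent of S whose Laplace transform satisfies E[exp(−μX)] = (1 − (λ + μ)δ)/(1 − λδ). Then E[min(X, S)] = δ/(1 − λδ) and P(S < X) = μδ/(1 − λδ). -/
/-!
Condition on `X`. For fixed `x ≥ 0`, the tail `P(S > t) = e^{-μt}` is continuous, so
`P(S < x) = 1 - e^{-μx}`, and the layer-cake formula gives
`E[min(x, S)] = ∫₀ˣ e^{-μt} dt = (1 - e^{-μx}) / μ`. By independence both quantities for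
random `X` are the averages of these over the law of `X`, hence are determined by
`E[1 - e^{-μX}] = 1 - (1 - (λ + μ)δ) / (1 - λδ) = μδ / (1 - λδ)`.
-/

open MeasureTheory ProbabilityTheory Set Filter Topology Real
open scoped ENNReal

lemma lintegral_Ioo_exp_neg_mul {μ : ℝ} (hμ : μ ≠ 0) {x : ℝ} (hx : 0 ≤ x) :
    ∫⁻ t in Ioo 0 x, ENNReal.ofReal (exp (-μ * t)) =
      ENNReal.ofReal ((1 - exp (-μ * x)) / μ) := by
  have hint : IntegrableOn (fun t ↦ exp (-μ * t)) (Ioo 0 x) :=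
    (by fun_prop : Continuous fun t ↦ exp (-μ * t)).integrableOn_Icc.mono_set Ioo_subset_Icc_self
  rw [← ofReal_integral_eq_lintegral_ofReal hint (ae_of_all _ fun t ↦ (exp_pos _).le),
    ← integral_Ioc_eq_integral_Ioo, ← intervalIntegral.integral_of_le hx,
    intervalIntegral.integral_comp_mul_left (fun t ↦ exp t) (neg_ne_zero.2 hμ), integral_exp]
  congr 1
  simp only [mul_zero, exp_zero, smul_eq_mul]
  field_simp
  ring

lemma one_sub_exp_neg_mul_nonneg {μ x : ℝ} (hμ : 0 ≤ μ) (hx : 0 ≤ x) :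
    0 ≤ 1 - exp (-μ * x) :=
  sub_nonneg.2 <| exp_le_one_iff.2 <| by nlinarith

lemma integrable_exp_neg_mul_of_nonneg {Ω : Type*} [MeasurableSpace Ω] {P : Measure Ω}
    [IsFiniteMeasure P] {X : Ω → ℝ} {μ : ℝ} (hμ : 0 ≤ μ) (hX : Measurable X)
    (hX0 : ∀ ω, 0 ≤ X ω) : Integrable (fun ω ↦ exp (-μ * X ω)) P :=
  .of_bound (by fun_prop) 1 <| ae_of_all _ fun ω ↦ by
    rw [norm_of_nonneg (exp_pos _).le, exp_le_one_iff]
    nlinarith [hX0 ω]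

def HasExpTail (σ : Measure ℝ) (μ : ℝ) : Prop :=
  ∀ t, 0 ≤ t → σ (Ioi t) = ENNReal.ofReal (exp (-μ * t))

section ExponentialTail

variable {μ : ℝ} {σ : Measure ℝ} [IsProbabilityMeasure σ]

lemma measure_Iic_eq_of_exp_tail (hμ : 0 ≤ μ) (hσ : HasExpTail σ μ) (t : ℝ) :
    σ (Iic t) = ENNReal.ofReal (1 - exp (-μ * t)) := by
  have hIic : ∀ t, 0 ≤ t → σ (Iic t) = ENNReal.ofReal (1 - exp (-μ * t)) := fun t ht ↦ by
    rw [← compl_Ioi, prob_compl_eq_one_sub measurableSet_Ioi, hσ t ht,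
      ENNReal.ofReal_sub _ (exp_pos _).le, ENNReal.ofReal_one]
  rcases le_or_gt 0 t with ht | ht
  · exact hIic t ht
  · have h0 : σ (Iic 0) = 0 := by simpa using hIic 0 le_rfl
    rw [ENNReal.ofReal_of_nonpos (sub_nonpos.2 (one_le_exp (by nlinarith)))]
    exact measure_mono_null (Iic_subset_Iic.2 ht.le) h0

lemma measure_Iio_eq_of_exp_tail (hμ : 0 ≤ μ) (hσ : HasExpTail σ μ) (x : ℝ) :
    σ (Iio x) = ENNReal.ofReal (1 - exp (-μ * x)) := by
  set u : ℕ → ℝ := fun n ↦ x - 1 / (n + 1)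
  have hu : Tendsto u atTop (𝓝 x) := by
    simpa [u] using (tendsto_const_nhds (x := x)).sub tendsto_one_div_add_atTop_nhds_zero_nat
  have hu_mono : Monotone fun n ↦ Iic (u n) := fun m n hmn ↦ Iic_subset_Iic.2 <| by
    simp only [u]
    gcongr
  rw [← iUnion_Iic_eq_Iio_of_lt_of_tendsto (fun n ↦ sub_lt_self x (by positivity)) hu]
  refine tendsto_nhds_unique (tendsto_measure_iUnion_atTop hu_mono) ?_
  simp only [Function.comp_def, measure_Iic_eq_of_exp_tail hμ hσ]
  have hcdf : Continuous fun t ↦ ENNReal.ofReal (1 - exp (-μ * t)) :=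
    ENNReal.continuous_ofReal.comp (by fun_prop)
  exact (hcdf.tendsto x).comp hu

lemma ae_pos_of_exp_tail (hμ : 0 ≤ μ) (hσ : HasExpTail σ μ) : ∀ᵐ s ∂σ, 0 < s := by
  rw [ae_iff]
  simp only [not_lt]
  exact (measure_Iic_eq_of_exp_tail hμ hσ 0).trans (by simp)

lemma lintegral_ofReal_min_eq_of_exp_tail (hμ : 0 < μ) (hσ : HasExpTail σ μ) {x : ℝ}
    (hx : 0 ≤ x) :
    ∫⁻ s, ENNReal.ofReal (min x s) ∂σ = ENNReal.ofReal ((1 - exp (-μ * x)) / μ) := by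
  have hmin_nonneg : ∀ᵐ s ∂σ, 0 ≤ min x s :=
    (ae_pos_of_exp_tail hμ.le hσ).mono fun s hs ↦ le_min hx hs.le
  have hlevel : EqOn (fun t ↦ σ {s | t < min x s})
      ((Iio x).indicator fun t ↦ ENNReal.ofReal (exp (-μ * t))) (Ioi 0) := by
    intro t ht
    by_cases htx : t < x
    · simp only [lt_min_iff, htx, true_and, indicator_of_mem (mem_Iio.2 htx)]
      exact hσ t ht.le
    · simp [htx]
  rw [lintegral_eq_lintegral_meas_lt σ hmin_nonneg (by fun_prop),
    setLIntegral_congr_fun measurableSet_Ioi hlevel, lintegral_indicator measurableSet_Iio,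
    Measure.restrict_restrict measurableSet_Iio, Iio_inter_Ioi,
    lintegral_Ioo_exp_neg_mul hμ.ne' hx]

end ExponentialTail

lemma ProbabilityTheory.IndepFun.lintegral_comp_eq_lintegral_lintegral_map {Ω α β : Type*}
    [MeasurableSpace Ω] [MeasurableSpace α] [MeasurableSpace β] {P : Measure Ω}
    [IsFiniteMeasure P] {X : Ω → α} {Y : Ω → β} (hXY : IndepFun X Y P) (hX : Measurable X)
    (hY : Measurable Y) {f : α × β → ℝ≥0∞} (hf : Measurable f) :
    ∫⁻ ω, f (X ω, Y ω) ∂P = ∫⁻ ω, ∫⁻ y, f (X ω, y) ∂(P.map Y) ∂P := by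
  rw [← lintegral_map hf (hX.prodMk hY),
    hXY.map_prod_eq_prod_map_map hX.aemeasurable hY.aemeasurable,
    lintegral_prod _ hf.aemeasurable, lintegral_map hf.lintegral_prod_right' hX]

section IndependentExponential

variable {Ω : Type*} [MeasurableSpace Ω] {P : Measure Ω} [IsProbabilityMeasure P]
  {X S : Ω → ℝ} {μ : ℝ}

lemma toReal_measure_lt_of_indepFun_exp_tail (hμ : 0 ≤ μ) (hX : Measurable X)
    (hS : Measurable S) (hX0 : ∀ ω, 0 ≤ X ω) (hXS : IndepFun X S P)
    (hσ : HasExpTail (P.map S) μ) :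
    (P {ω | S ω < X ω}).toReal = ∫ ω, (1 - exp (-μ * X ω)) ∂P := by
  have := Measure.isProbabilityMeasure_map (μ := P) hS.aemeasurable
  have hlt : MeasurableSet {p : ℝ × ℝ | p.2 < p.1} :=
    measurableSet_lt measurable_snd measurable_fst
  have hprob : P {ω | S ω < X ω} = ∫⁻ ω, ENNReal.ofReal (1 - exp (-μ * X ω)) ∂P := calc
    P {ω | S ω < X ω} = ∫⁻ ω, {p : ℝ × ℝ | p.2 < p.1}.indicator 1 (X ω, S ω) ∂P :=
      (lintegral_indicator_one (measurableSet_lt hS hX)).symm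
    _ = ∫⁻ ω, P.map S (Iio (X ω)) ∂P := by
      rw [hXS.lintegral_comp_eq_lintegral_lintegral_map hX hS (measurable_one.indicator hlt)]
      exact lintegral_congr fun ω ↦ lintegral_indicator_one measurableSet_Iio
    _ = ∫⁻ ω, ENNReal.ofReal (1 - exp (-μ * X ω)) ∂P := by
      simp_rw [measure_Iio_eq_of_exp_tail hμ hσ]
  rw [hprob, integral_eq_lintegral_of_nonneg_ae
    (ae_of_all _ fun ω ↦ one_sub_exp_neg_mul_nonneg hμ (hX0 ω)) (by fun_prop)]

lemma integral_min_of_indepFun_exp_tail (hμ : 0 < μ) (hX : Measurable X) (hS : Measurable S)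
    (hX0 : ∀ ω, 0 ≤ X ω) (hXS : IndepFun X S P) (hσ : HasExpTail (P.map S) μ) :
    ∫ ω, min (X ω) (S ω) ∂P = ∫ ω, (1 - exp (-μ * X ω)) / μ ∂P := by
  have := Measure.isProbabilityMeasure_map (μ := P) hS.aemeasurable
  have hS0 : ∀ᵐ ω ∂P, 0 < S ω := ae_of_ae_map hS.aemeasurable (ae_pos_of_exp_tail hμ.le hσ)
  rw [integral_eq_lintegral_of_nonneg_ae (hS0.mono fun ω h ↦ le_min (hX0 ω) h.le)
      (by fun_prop),
    integral_eq_lintegral_of_nonneg_ae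
      (ae_of_all _ fun ω ↦ div_nonneg (one_sub_exp_neg_mul_nonneg hμ.le (hX0 ω)) hμ.le)
      (by fun_prop),
    hXS.lintegral_comp_eq_lintegral_lintegral_map (f := fun p ↦ ENNReal.ofReal (min p.1 p.2))
      hX hS (by fun_prop)]
  exact congrArg _ <| lintegral_congr fun ω ↦
    lintegral_ofReal_min_eq_of_exp_tail hμ hσ (hX0 ω)

end IndependentExponential

theorem optimal_laplace_gives_binding_delay_and_utilization_general {Ω : Type*} [MeasureSpace Ω]
    [IsProbabilityMeasure (ℙ : Measure Ω)]
    (lam μ δ : ℝ) (hμ : 0 < μ) (hδ : 0 < δ)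
    (hδ1 : (lam + μ) * δ < 1)
    (X S : Ω → ℝ) (hX : Measurable X) (hS : Measurable S)
    (hX0 : ∀ ω, 0 ≤ X ω)
    (hSexp : ∀ t : ℝ, 0 ≤ t → ℙ {ω | t < S ω} = ENNReal.ofReal (Real.exp (-μ * t)))
    (hindep : IndepFun X S ℙ)
    (hlaplace : ∫ ω, Real.exp (-μ * X ω) ∂ℙ = (1 - (lam + μ) * δ) / (1 - lam * δ)) :
    ∫ ω, min (X ω) (S ω) ∂ℙ = δ / (1 - lam * δ) ∧
    (ℙ {ω | S ω < X ω}).toReal = μ * δ / (1 - lam * δ) := by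
  have hσ : HasExpTail ((ℙ : Measure Ω).map S) μ := fun t ht ↦
    (Measure.map_apply hS measurableSet_Ioi).trans (hSexp t ht)
  have hden : 0 < 1 - lam * δ := by nlinarith
  have hmean : ∫ ω, (1 - exp (-μ * X ω)) ∂ℙ = μ * δ / (1 - lam * δ) := by
    rw [integral_sub (integrable_const 1) (integrable_exp_neg_mul_of_nonneg hμ.le hX hX0),
      hlaplace, integral_const, probReal_univ, one_smul]
    field_simp
    ring
  refine ⟨?_, ?_⟩
  · rw [integral_min_of_indepFun_exp_tail hμ hX hS hX0 hindep hσ, integral_div, hmean]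
    field_simp
  · rw [toReal_measure_lt_of_indepFun_exp_tail hμ.le hX hS hX0 hindep hσ, hmean]

/-- For rates `lam, μ > 0` and target delay `δ > 0` with `(lam + μ)δ < 1`:
if `S` is exponential with rate `μ`, and `X ≥ 0` is independent of `S` with
`E[exp(−μ X)] = (1 − (lam + μ)δ)/(1 − lam δ)`, then
`E[min(X, S)] = δ/(1 − lam δ)` and `P(S < X) = μδ/(1 − lam δ)`. -/
theorem optimal_laplace_gives_binding_delay_and_utilization {Ω : Type*} [MeasureSpace Ω]
    [IsProbabilityMeasure (ℙ : Measure Ω)]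
    (lam μ δ : ℝ) (hlam : 0 < lam) (hμ : 0 < μ) (hδ : 0 < δ)
    (hδ1 : (lam + μ) * δ < 1)
    (X S : Ω → ℝ) (hX : Measurable X) (hS : Measurable S)
    (hX0 : ∀ ω, 0 ≤ X ω)
    (hSexp : ∀ t : ℝ, 0 ≤ t → ℙ {ω | t < S ω} = ENNReal.ofReal (Real.exp (-μ * t)))
    (hindep : IndepFun X S ℙ)
    (hlaplace : ∫ ω, Real.exp (-μ * X ω) ∂ℙ = (1 - (lam + μ) * δ) / (1 - lam * δ)) :
    ∫ ω, min (X ω) (S ω) ∂ℙ = δ / (1 - lam * δ) ∧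
    (ℙ {ω | S ω < X ω}).toReal = μ * δ / (1 - lam * δ) :=
  optimal_laplace_gives_binding_delay_and_utilization_general lam μ δ hμ hδ hδ1 X S hX hS hX0 hSexp
    hindep hlaplace
end

section
/- Let λ, μ, δ, L > 0 with λδ < 1 and p := μδ/(1 − λδ) ≤ 1. Let S be a nonnegative random variable with S ≤ L almost surely, E[S] = 1/μ, and P(S = L) = 0. Let X be a random variable independent of S with P(X = 0) = 1 − p and P(X ≥ L) = p. Then E[min(X, S)] = δ/(1 − λδ) and P(S < X) = p = μδ/(1 − λδ). -/
/-!
Since `P(X = 0) + P(X ≥ L) = 1`, almost surely `X ∈ {0} ∪ [L, ∞)`, while `0 ≤ S < L` almost surely.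
Hence `min(X, S) = 1{X ≥ L} · S` and `{S < X} = {X ≥ L}` up to null sets, and independence
factors `E[1{X ≥ L} · S] = p · E[S] = p / μ`.
-/

open MeasureTheory ProbabilityTheory

section

variable {Ω : Type*} [MeasurableSpace Ω] {μ : Measure Ω}

lemma ae_mem_union_of_measureReal_add_eq_one [IsProbabilityMeasure μ] {s t : Set Ω}
    (hd : Disjoint s t) (hs : MeasurableSet s) (ht : MeasurableSet t)
    (h : μ.real s + μ.real t = 1) : ∀ᵐ ω ∂μ, ω ∈ s ∪ t := by
  rw [ae_mem_iff_measure_eq (hs.union ht).nullMeasurableSet, measure_univ,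
    ← ENNReal.toReal_eq_one_iff, ← measureReal_def, measureReal_union hd ht, h]

lemma ProbabilityTheory.IndepFun.integral_indicator_comp_mul [IsFiniteMeasure μ] {X Y : Ω → ℝ}
    (hXY : IndepFun X Y μ) (hX : Measurable X) (hY : AEStronglyMeasurable Y μ)
    {s : Set ℝ} (hs : MeasurableSet s) :
    ∫ ω, s.indicator 1 (X ω) * Y ω ∂μ = μ.real (X ⁻¹' s) * ∫ ω, Y ω ∂μ := by
  have hind : Measurable (s.indicator (1 : ℝ → ℝ)) := measurable_one.indicator hs
  calc ∫ ω, s.indicator 1 (X ω) * Y ω ∂μ = (∫ ω, s.indicator 1 (X ω) ∂μ) * ∫ ω, Y ω ∂μ :=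
        (hXY.comp hind measurable_id).integral_fun_mul_eq_mul_integral
          (hind.comp hX).aestronglyMeasurable hY
    _ = μ.real (X ⁻¹' s) * ∫ ω, Y ω ∂μ := congrArg (· * _) (integral_indicator_one (hX hs))

end

lemma min_eq_indicator_Ici_mul {x s L : ℝ} (hx : x = 0 ∨ L ≤ x) (hs0 : 0 ≤ s) (hsL : s ≤ L) :
    min x s = (Set.Ici L).indicator 1 x * s := by
  rcases hx with rfl | hLx
  · by_cases hL : L ≤ 0
    · simp [Set.indicator_of_mem (Set.mem_Ici.2 hL), le_antisymm (hsL.trans hL) hs0]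
    · simp [Set.indicator_of_notMem (show (0 : ℝ) ∉ Set.Ici L from hL), hs0]
  · simp [Set.indicator_of_mem (Set.mem_Ici.2 hLx), hsL.trans hLx]

lemma lt_iff_le_of_eq_zero_or_le {x s L : ℝ} (hx : x = 0 ∨ L ≤ x) (hs0 : 0 ≤ s) (hsL : s < L) :
    s < x ↔ L ≤ x := by
  rcases hx with rfl | hLx
  · constructor <;> intro h <;> linarith
  · exact ⟨fun _ => hLx, hsL.trans_le⟩

theorem finite_support_optimal_wait_general {Ω : Type*} [MeasureSpace Ω]
    [IsProbabilityMeasure (ℙ : Measure Ω)]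
    (lam μ δ L : ℝ) (hμ : 0 < μ) (hL : 0 < L)
    (X S : Ω → ℝ) (hX : Measurable X)
    (hS0 : ∀ ω, 0 ≤ S ω) (hSL : ∀ᵐ ω ∂ℙ, S ω ≤ L)
    (hSint : Integrable S ℙ) (hES : ∫ ω, S ω ∂ℙ = 1 / μ)
    (hSneL : ℙ {ω | S ω = L} = 0)
    (hindep : IndepFun X S ℙ)
    (hX0 : (ℙ {ω | X ω = 0}).toReal = 1 - μ * δ / (1 - lam * δ))
    (hXL : (ℙ {ω | L ≤ X ω}).toReal = μ * δ / (1 - lam * δ)) :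
    ∫ ω, min (X ω) (S ω) ∂ℙ = δ / (1 - lam * δ) ∧
    (ℙ {ω | S ω < X ω}).toReal = μ * δ / (1 - lam * δ) := by
  have hdisj : Disjoint {ω | X ω = 0} {ω | L ≤ X ω} :=
    Set.disjoint_left.2 fun ω (h0 : X ω = 0) (hLX : L ≤ X ω) => by linarith
  have hXdich : ∀ᵐ ω ∂ℙ, X ω = 0 ∨ L ≤ X ω :=
    ae_mem_union_of_measureReal_add_eq_one hdisj (hX (measurableSet_singleton 0))
      (hX measurableSet_Ici) (by
        show (ℙ {ω | X ω = 0}).toReal + (ℙ {ω | L ≤ X ω}).toReal = 1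
        rw [hX0, hXL]; ring)
  have hSltL : ∀ᵐ ω ∂ℙ, S ω < L := by
    filter_upwards [hSL, measure_eq_zero_iff_ae_notMem.mp hSneL] with ω hle hne
    exact lt_of_le_of_ne hle hne
  constructor
  · calc ∫ ω, min (X ω) (S ω) ∂ℙ = ∫ ω, (Set.Ici L).indicator 1 (X ω) * S ω ∂ℙ := by
          refine integral_congr_ae ?_
          filter_upwards [hXdich, hSL] with ω hx hs using min_eq_indicator_Ici_mul hx (hS0 ω) hs
      _ = μ * δ / (1 - lam * δ) * (1 / μ) := by
          rw [hindep.integral_indicator_comp_mul hX hSint.aestronglyMeasurable measurableSet_Ici,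
            hES]
          exact congrArg (· * (1 / μ)) hXL
      _ = δ / (1 - lam * δ) := by field_simp [hμ.ne']
  · rw [← hXL]
    refine congrArg ENNReal.toReal (measure_congr (Filter.eventuallyEq_set.2 ?_))
    filter_upwards [hXdich, hSltL] with ω hx hs using lt_iff_le_of_eq_zero_or_le hx (hS0 ω) hs

/-- Finite-support spot inter-arrival times: if `S ∈ [0, L]` a.s. with `E[S] = 1/μ`
and `P(S = L) = 0`, and the independent maximal wait time `X` has
`P(X = 0) = 1 − p` and `P(X ≥ L) = p` with `p = μδ/(1 − lam δ)`, then the delay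
constraint is binding, `E[min(X, S)] = δ/(1 − lam δ)`, and the spot-utilization
probability is `P(S < X) = μδ/(1 − lam δ)`. -/
theorem finite_support_optimal_wait {Ω : Type*} [MeasureSpace Ω]
    [IsProbabilityMeasure (ℙ : Measure Ω)]
    (lam μ δ L : ℝ) (hlam : 0 < lam) (hμ : 0 < μ) (hδ : 0 < δ) (hL : 0 < L)
    (hδ1 : lam * δ < 1) (hp : μ * δ / (1 - lam * δ) ≤ 1)
    (X S : Ω → ℝ) (hX : Measurable X) (hS : Measurable S)
    (hS0 : ∀ ω, 0 ≤ S ω) (hSL : ∀ᵐ ω ∂ℙ, S ω ≤ L)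
    (hSint : Integrable S ℙ) (hES : ∫ ω, S ω ∂ℙ = 1 / μ)
    (hSneL : ℙ {ω | S ω = L} = 0)
    (hindep : IndepFun X S ℙ)
    (hX0 : (ℙ {ω | X ω = 0}).toReal = 1 - μ * δ / (1 - lam * δ))
    (hXL : (ℙ {ω | L ≤ X ω}).toReal = μ * δ / (1 - lam * δ)) :
    ∫ ω, min (X ω) (S ω) ∂ℙ = δ / (1 - lam * δ) ∧
    (ℙ {ω | S ω < X ω}).toReal = μ * δ / (1 - lam * δ) :=
  finite_support_optimal_wait_general lam μ δ L hμ hL X S hX hS0 hSL hSint hES hSneL hindep hX0 hXL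
end

section
/- Let L > 0, let S be uniformly distributed on [0, L], and let X be a nonnegative random variable independent of S. Then P(S < X) ≤ (2/L)·E[min(X, S)], and equality holds if and only if P(0 < X < L) = 0. -/
/-!
Condition on `X = x ≥ 0` and put `m = min x L`. Then `P(S < x) = m / L` and
`E[min(x, S)] = m (2L - m) / (2L)`, so `(2/L) E[min(x, S)] - P(S < x) = m (L - m) / L²`,
which is nonnegative and vanishes exactly when `x ∉ (0, L)`. By independence the joint law of
`(X, S)` is a product, so integrating this gap against the law of `X` gives the inequality, and
the equality case because a nonnegative integrand with zero integral vanishes almost everywhere.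
-/

open MeasureTheory ProbabilityTheory Set

lemma measureReal_prod_eq_integral {α β : Type*} [MeasurableSpace α] [MeasurableSpace β]
    {μ : Measure α} {ν : Measure β} [IsFiniteMeasure ν] {s : Set (α × β)}
    (hs : MeasurableSet s) :
    (μ.prod ν).real s = ∫ x, ν.real (Prod.mk x ⁻¹' s) ∂μ := by
  rw [measureReal_def, Measure.prod_apply hs, ← integral_toReal
    (measurable_measure_prodMk_left hs).aemeasurable (ae_of_all _ fun _ => measure_lt_top ν _)]
  rfl

lemma integral_cond_Icc {a b : ℝ} (hab : a ≤ b) (f : ℝ → ℝ) :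
    ∫ s, f s ∂volume[|Icc a b] = (∫ s in a..b, f s) / (b - a) := by
  rw [ProbabilityTheory.cond, integral_smul_measure, Real.volume_Icc, integral_Icc_eq_integral_Ioc,
    ← intervalIntegral.integral_of_le hab, ENNReal.toReal_inv,
    ENNReal.toReal_ofReal (sub_nonneg.2 hab), smul_eq_mul, inv_mul_eq_div]

lemma measureReal_cond_Icc_Iio {L x : ℝ} (hL : 0 < L) (hx : 0 ≤ x) :
    (volume[|Icc (0 : ℝ) L]).real (Iio x) = min x L / L := by
  have hvol : volume (Icc (0 : ℝ) L ∩ Iio x) = ENNReal.ofReal (min x L) := by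
    rw [← measure_congr ((Ico_ae_eq_Icc (μ := volume)).inter (ae_eq_refl (Iio x))),
      Ico_inter_Iio, Real.volume_Ico, sub_zero, min_comm]
  rw [measureReal_def, cond_apply measurableSet_Icc, hvol, Real.volume_Icc, sub_zero,
    ENNReal.toReal_mul, ENNReal.toReal_inv, ENNReal.toReal_ofReal hL.le,
    ENNReal.toReal_ofReal (le_min hx hL.le), inv_mul_eq_div]

lemma integral_min_of_nonneg {x L : ℝ} (hx : 0 ≤ x) (hL : 0 ≤ L) :
    ∫ s in (0 : ℝ)..L, min x s = min x L * (2 * L - min x L) / 2 := by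
  set m := min x L
  have hmL : m ≤ L := min_le_right _ _
  have hcont : Continuous (min x) := by fun_prop
  have hlow : ∫ s in (0 : ℝ)..m, min x s = ∫ s in (0 : ℝ)..m, s :=
    intervalIntegral.integral_congr fun s hs => by
      rw [uIcc_of_le (le_min hx hL)] at hs
      exact min_eq_right (hs.2.trans (min_le_left _ _))
  have hhigh : ∫ s in m..L, min x s = ∫ s in m..L, m :=
    intervalIntegral.integral_congr fun s hs => by
      rw [uIcc_of_le hmL] at hs
      exact le_antisymm (min_le_min_left x hs.2) (le_min (min_le_left _ _) hs.1)
  rw [← intervalIntegral.integral_add_adjacent_intervals (b := m) (hcont.intervalIntegrable _ _)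
    (hcont.intervalIntegrable _ _), hlow, hhigh, integral_id, intervalIntegral.integral_const,
    smul_eq_mul]
  ring

noncomputable def utilizationGap (L x : ℝ) : ℝ := min x L * (L - min x L) / L ^ 2

lemma utilizationGap_nonneg {L x : ℝ} (hx : 0 ≤ x) : 0 ≤ utilizationGap L x := by
  rcases le_total x L with hxL | hLx
  · rw [utilizationGap, min_eq_left hxL]
    have : 0 ≤ L - x := sub_nonneg.2 hxL
    positivity
  · simp [utilizationGap, min_eq_right hLx]

lemma utilizationGap_le {L : ℝ} (hL : L ≠ 0) (x : ℝ) : utilizationGap L x ≤ 1 / 4 := by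
  rw [utilizationGap, div_le_iff₀ (by positivity)]
  nlinarith [sq_nonneg (L - 2 * min x L)]

lemma utilizationGap_eq_zero_iff {L x : ℝ} (hL : L ≠ 0) (hx : 0 ≤ x) :
    utilizationGap L x = 0 ↔ x ∉ Ioo 0 L := by
  rw [utilizationGap, div_eq_zero_iff, or_iff_left (pow_ne_zero 2 hL), mul_eq_zero, sub_eq_zero,
    mem_Ioo, not_and_or, not_lt, not_lt]
  rcases le_total x L with hxL | hLx
  · rw [min_eq_left hxL]
    constructor
    · rintro (h | h) <;> [exact .inl h.le; exact .inr h.le]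
    · rintro (h | h) <;> [exact .inl (le_antisymm h hx); exact .inr (le_antisymm hxL h).symm]
  · simp [hLx]

lemma utilizationGap_eq {L x : ℝ} (hL : 0 < L) (hx : 0 ≤ x) :
    utilizationGap L x = 2 / L * ∫ s, min x s ∂volume[|Icc (0 : ℝ) L] -
      (volume[|Icc (0 : ℝ) L]).real (Iio x) := by
  rw [integral_cond_Icc hL.le, sub_zero, integral_min_of_nonneg hx hL.le,
    measureReal_cond_Icc_Iio hL hx, utilizationGap]
  field_simp
  ring

section

variable {μ : Measure ℝ} [IsFiniteMeasure μ] {L : ℝ}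

lemma integral_utilizationGap (hL : 0 < L) (hμ : ∀ᵐ x ∂μ, 0 ≤ x) :
    ∫ x, utilizationGap L x ∂μ =
      2 / L * ∫ p, min p.1 p.2 ∂(μ.prod volume[|Icc (0 : ℝ) L]) -
        (μ.prod volume[|Icc (0 : ℝ) L]).real {p | p.2 < p.1} := by
  set ν := volume[|Icc (0 : ℝ) L]
  have : IsProbabilityMeasure ν :=
    cond_isProbabilityMeasure_of_finite (by simpa using hL) measure_Icc_lt_top.ne
  have hmin : Integrable (fun p : ℝ × ℝ => min p.1 p.2) (μ.prod ν) := by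
    refine .of_bound (by fun_prop) L ?_
    filter_upwards [Measure.quasiMeasurePreserving_fst.ae hμ,
      Measure.quasiMeasurePreserving_snd.ae (ae_cond_mem measurableSet_Icc)] with p hx hs
    rw [Real.norm_eq_abs, abs_le]
    exact ⟨by linarith [le_min hx hs.1], (min_le_right _ _).trans hs.2⟩
  have hlt : (μ.prod ν).real {p | p.2 < p.1} = ∫ x, ν.real (Iio x) ∂μ :=
    measureReal_prod_eq_integral (measurableSet_lt measurable_snd measurable_fst)
  have hcdf : Integrable (fun x => ν.real (Iio x)) μ := by
    have hmono : Monotone fun x => ν.real (Iio x) :=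
      fun _ _ h => measureReal_mono (Iio_subset_Iio h)
    refine .of_bound hmono.measurable.aestronglyMeasurable 1 (ae_of_all _ fun x => ?_)
    rw [Real.norm_of_nonneg measureReal_nonneg]
    exact measureReal_le_one
  rw [integral_prod _ hmin, hlt, ← integral_const_mul,
    ← integral_sub (hmin.integral_prod_left.const_mul _) hcdf]
  exact integral_congr_ae (hμ.mono fun x hx => utilizationGap_eq hL hx)

lemma integral_utilizationGap_eq_zero_iff (hL : L ≠ 0) (hμ : ∀ᵐ x ∂μ, 0 ≤ x) :
    ∫ x, utilizationGap L x ∂μ = 0 ↔ μ (Ioo 0 L) = 0 := by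
  have hint : Integrable (utilizationGap L) μ := by
    refine .of_bound (by unfold utilizationGap; fun_prop) (1 / 4) ?_
    filter_upwards [hμ] with x hx
    rw [Real.norm_of_nonneg (utilizationGap_nonneg hx)]
    exact utilizationGap_le hL x
  calc ∫ x, utilizationGap L x ∂μ = 0 ↔ ∀ᵐ x ∂μ, utilizationGap L x = 0 :=
        integral_eq_zero_iff_of_nonneg_ae (hμ.mono fun _ => utilizationGap_nonneg) hint
    _ ↔ ∀ᵐ x ∂μ, x ∉ Ioo 0 L :=
        Filter.eventually_congr (hμ.mono fun _ => utilizationGap_eq_zero_iff hL)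
    _ ↔ μ (Ioo 0 L) = 0 := measure_eq_zero_iff_ae_notMem.symm

end

/-- Uniform spot inter-arrival times: if `S` is uniformly distributed on `[0, L]` and
`X ≥ 0` is independent of `S`, then `P(S < X) ≤ (2/L) · E[min(X, S)]`, with equality
iff `X` puts no mass on the open interval `(0, L)`. -/
theorem uniform_spot_utilization_le {Ω : Type*} [MeasureSpace Ω]
    [IsProbabilityMeasure (ℙ : Measure Ω)]
    (L : ℝ) (hL : 0 < L)
    (X S : Ω → ℝ) (hX : Measurable X) (hS : Measurable S)
    (hX0 : ∀ ω, 0 ≤ X ω)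
    (hSunif : MeasureTheory.pdf.IsUniform S (Set.Icc (0 : ℝ) L) ℙ volume)
    (hindep : IndepFun X S ℙ) :
    (ℙ {ω | S ω < X ω}).toReal ≤ (2 / L) * ∫ ω, min (X ω) (S ω) ∂ℙ ∧
    ((ℙ {ω | S ω < X ω}).toReal = (2 / L) * ∫ ω, min (X ω) (S ω) ∂ℙ ↔
      ℙ {ω | 0 < X ω ∧ X ω < L} = 0) := by
  set μ := Measure.map X ℙ
  have hlaw : Measure.map (fun ω => (X ω, S ω)) ℙ = μ.prod volume[|Icc (0 : ℝ) L] := by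
    rw [← hSunif]
    exact (indepFun_iff_map_prod_eq_prod_map_map hX.aemeasurable hS.aemeasurable).1 hindep
  set ν := volume[|Icc (0 : ℝ) L]
  have hP : (ℙ {ω | S ω < X ω}).toReal = (μ.prod ν).real {p | p.2 < p.1} := by
    rw [← hlaw, map_measureReal_apply (hX.prodMk hS)
      (measurableSet_lt measurable_snd measurable_fst)]
    rfl
  have hE : ∫ ω, min (X ω) (S ω) ∂ℙ = ∫ p, min p.1 p.2 ∂(μ.prod ν) := by
    rw [← hlaw, integral_map (hX.prodMk hS).aemeasurable (by fun_prop)]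
  have hmass : ℙ {ω | 0 < X ω ∧ X ω < L} = μ (Ioo 0 L) :=
    (Measure.map_apply hX measurableSet_Ioo).symm
  have hμ : ∀ᵐ x ∂μ, 0 ≤ x :=
    (ae_map_iff hX.aemeasurable measurableSet_Ici).2 (ae_of_all _ hX0)
  have hgap := integral_utilizationGap hL hμ
  rw [hP, hE, hmass]
  refine ⟨sub_nonneg.1 (hgap ▸ integral_nonneg_of_ae (hμ.mono fun _ => utilizationGap_nonneg)),
    ?_⟩
  rw [eq_comm, ← sub_eq_zero, ← hgap]
  exact integral_utilizationGap_eq_zero_iff hL.ne' hμ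
end

section
/- Let ρ > 0 with ρ ≠ 1 and let k > 1. The function N ↦ k − (k − 1)·(1/ρ)·(1 − (ρ − 1)/(ρ^{N+1} − 1)), defined on positive integers N, is strictly decreasing in N. -/
/-! Since `(ρ - 1) / (ρ ^ n - 1) = (1 + ρ + ⋯ + ρ ^ (n - 1))⁻¹` for `ρ ≠ 1`, the idle
probability `π₀` is the reciprocal of a geometric sum, which for `ρ > 0` is strictly increasing
in `n`. Hence `π₀` strictly decreases in `N`, and the cost, an increasing affine function of `π₀`
with slope `(k - 1) / ρ > 0`, strictly decreases as well. -/

open Finset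

lemma div_pow_sub_one_eq_inv_geom_sum {K : Type*} [Field K] {x : K} (hx : x ≠ 1) (n : ℕ) :
    (x - 1) / (x ^ n - 1) = (∑ i ∈ range n, x ^ i)⁻¹ := by
  rw [geom_sum_eq hx, inv_div]

lemma geom_sum_strictMono {R : Type*} [Semiring R] [PartialOrder R] [IsStrictOrderedRing R]
    {x : R} (hx : 0 < x) : StrictMono fun n : ℕ => ∑ i ∈ range n, x ^ i :=
  strictMono_nat_of_lt_succ fun n => by
    simpa only [sum_range_succ] using lt_add_of_pos_right _ (pow_pos hx n)

lemma div_pow_succ_sub_one_strictAnti {K : Type*} [Field K] [LinearOrder K]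
    [IsStrictOrderedRing K] {x : K} (hx : 0 < x) (hx1 : x ≠ 1) :
    StrictAnti fun n : ℕ => (x - 1) / (x ^ (n + 1) - 1) := by
  intro m n hmn
  simp only [div_pow_sub_one_eq_inv_geom_sum hx1]
  exact inv_strictAnti₀ (geom_sum_pos hx.le m.succ_ne_zero)
    (geom_sum_strictMono hx (Nat.succ_lt_succ hmn))

/-- The minimum achievable cost `E[C_N] = k − (k−1)(1/ρ)(1 − (ρ−1)/(ρ^{N+1} − 1))`
of the M/M/1/N system is strictly decreasing in the queue-length cap `N ≥ 1`,
for any traffic intensity `ρ > 0`, `ρ ≠ 1`, and on-demand cost `k > 1`. -/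
theorem cost_strictAnti (ρ k : ℝ) (hρ : 0 < ρ) (hρ1 : ρ ≠ 1) (hk : 1 < k) :
    ∀ M N : ℕ, 1 ≤ M → M < N →
      k - (k - 1) * (1 / ρ) * (1 - (ρ - 1) / (ρ ^ (N + 1) - 1))
        < k - (k - 1) * (1 / ρ) * (1 - (ρ - 1) / (ρ ^ (M + 1) - 1)) := by
  intro M N _ hMN
  have hslope : 0 < (k - 1) * (1 / ρ) := by
    have := sub_pos.mpr hk
    positivity
  have hπ₀ := div_pow_succ_sub_one_strictAnti hρ hρ1 hMN
  gcongr
end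

section
/- Let ρ > 0. The function N ↦ (∑_{n=1}^N n·ρ^n)/(1 + ∑_{n=1}^N ρ^n), defined on nonnegative integers N, is strictly increasing in N. -/
/-!
The quantity is the mean of `n ∈ {0, …, N}` under the weights `ρ ^ n`. Passing from `N` to `N + 1`
adds the point `N + 1`, which lies strictly above every point averaged so far, hence strictly above
their mean; a mediant of the old mean and the new point therefore exceeds the old mean.
-/

open Finset

section WeightedMean

variable {K : Type*} [Field K] [LinearOrder K] [IsStrictOrderedRing K]

theorem div_lt_add_div_add {a b c d : K} (hb : 0 < b) (hd : 0 < d) (h : a / b < c / d) :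
    a / b < (a + c) / (b + d) := by
  rw [div_lt_div_iff₀ hb hd] at h
  rw [div_lt_div_iff₀ hb (add_pos hb hd)]
  linarith [mul_add a b d, add_mul a c b]

theorem strictMono_weightedMean {x w : ℕ → K} (hx : StrictMono x) (hw : ∀ n, 0 < w n) :
    StrictMono fun N => (∑ n ∈ Icc 0 N, w n * x n) / ∑ n ∈ Icc 0 N, w n := by
  refine strictMono_nat_of_lt_succ fun N => ?_
  have hW : 0 < ∑ n ∈ Icc 0 N, w n := sum_pos (fun n _ => hw n) (nonempty_Icc.2 N.zero_le)
  have hmean_le : ∑ n ∈ Icc 0 N, w n * x n ≤ (∑ n ∈ Icc 0 N, w n) * x N := by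
    rw [sum_mul]
    gcongr with n hn
    · exact (hw n).le
    · exact hx.monotone (mem_Icc.1 hn).2
  simp only [sum_Icc_succ_top (Nat.zero_le _)]
  refine div_lt_add_div_add hW (hw _) ?_
  rw [mul_div_cancel_left₀ _ (hw _).ne', div_lt_iff₀' hW]
  exact hmean_le.trans_lt (mul_lt_mul_of_pos_left (hx N.lt_succ_self) hW)

end WeightedMean

/-- The normalized minimum delay `λ·δ_N = (∑_{n=1}^N n ρ^n)/(1 + ∑_{n=1}^N ρ^n)`
of the M/M/1/N system is strictly increasing in the queue-length cap `N ≥ 0`,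
for any traffic intensity `ρ > 0`. -/
theorem delay_strictMono (ρ : ℝ) (hρ : 0 < ρ) :
    StrictMono (fun N : ℕ =>
      (∑ n ∈ Finset.Icc 1 N, (n : ℝ) * ρ ^ n) / (1 + ∑ n ∈ Finset.Icc 1 N, ρ ^ n)) := by
  have hmean : (fun N : ℕ =>
      (∑ n ∈ Icc 1 N, (n : ℝ) * ρ ^ n) / (1 + ∑ n ∈ Icc 1 N, ρ ^ n)) =
      fun N : ℕ => (∑ n ∈ Icc 0 N, ρ ^ n * (n : ℝ)) / ∑ n ∈ Icc 0 N, ρ ^ n := by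
    funext N
    rw [← add_sum_Ioc_eq_sum_Icc N.zero_le, ← add_sum_Ioc_eq_sum_Icc N.zero_le,
      ← Icc_add_one_left_eq_Ioc]
    simp [mul_comm]
  exact hmean ▸ strictMono_weightedMean Nat.strictMono_cast (pow_pos hρ)
end
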